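/- arXiv:2511.19354 — 5 statements merged into one kernel-verified Lean document; each statement's English description precedes it below -/
import Mathlib

section
/- For every nonprincipal u ∈ βℕ the following are equivalent: (i) u is a weak P-point; (ii) for all f : ℕ → βℕ and v ∈ βℕ with f̃(v) = u there exists i ∈ ℕ with f(i) = u or f(i) principal; (iii) for all f : ℕ → βℕ and v ∈ βℕ with f̃(v) = u, either {i : f(i) = u} ∈ v or {i : f(i) is principal} ∈ v; (iv) for all g : ℕ × ℕ → ℕ and v, w ∈ βℕ with u = Ultrafilter.map g (v ⊗ w) there exists i ∈ ℕ such that Ultrafilter.map (fun j => g (i, j)) w equals u or is principal; (v) for all g : ℕ × ℕ → ℕ and v, w ∈ βℕ with u = Ultrafilter.map g (v ⊗ w), either {i : Ultrafilter.map (fun j => g (i, j)) w = u} ∈ v or {i : Ultrafilter.map (fun j => g (i, j)) w is principal} ∈ v. -/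
/-!
A countable set of ultrafilters avoiding `u` and the principal ones is the range of some
`f : ℕ → βℕ`, and the closure of that range is the range of `f̃`, the image of a compact space;
this gives (i) ⇔ (ii). On `βℕ`, `f̃ v` is the `v`-sum `v.bind f`, which does not change when `f` is
altered on a `v`-null set: redirecting the indices where `f i = u` or `f i` is principal to a
nonprincipal ultrafilter other than `u` upgrades (ii) to (iii). Finally `g (v ⊗ w)` is the
`v`-sum of the images of `w` under the sections `g (i, ·)`, and every sequence `f` arises this
way: an ultrafilter `w` on finite sequences refining the truncations of `atTop ×ˢ ∏ i, f i` has
`f i` as its `i`-th coordinate. So (iv) and (v) are (ii) and (iii).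
-/

/-- The tensor (Fubini) product of ultrafilters: `S ∈ tensor u v` iff
`{x | {y | (x, y) ∈ S} ∈ v} ∈ u`. -/
def tensor {X Y : Type*} (u : Ultrafilter X) (v : Ultrafilter Y) : Ultrafilter (X × Y) :=
  u.bind fun x => v.map fun y => (x, y)

/-- The Rudin–Keisler preorder: `u ≤_RK v` iff `u` is the image of `v` under some map. -/
def RKLE {X Y : Type*} (u : Ultrafilter X) (v : Ultrafilter Y) : Prop :=
  ∃ f : Y → X, Ultrafilter.map f v = u

/-- Isomorphism of ultrafilters: image under a bijection. -/
def UIso {X Y : Type*} (u : Ultrafilter X) (v : Ultrafilter Y) : Prop :=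
  ∃ f : Y → X, Function.Bijective f ∧ Ultrafilter.map f v = u

/-- An ultrafilter is principal iff it is `pure x` for some point `x`. -/
def IsPrincipal {X : Type*} (u : Ultrafilter X) : Prop := ∃ x, u = pure x

/-- A weak P-point: a nonprincipal ultrafilter on `ℕ` not in the closure of any countable
set of ultrafilters avoiding it and all principal ultrafilters. -/
def WeakPPoint (u : Ultrafilter ℕ) : Prop :=
  ¬ IsPrincipal u ∧ ∀ A : Set (Ultrafilter ℕ), A.Countable → u ∉ A →
    (∀ x ∈ A, ¬ IsPrincipal x) → u ∉ closure A

/-- A space `Z` is `u`-compact iff every pushforward of `u` to `Z` converges. -/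
def UCompact {X : Type*} (u : Ultrafilter X) (Z : Type*) [TopologicalSpace Z] : Prop :=
  ∀ f : X → Z, ∃ z : Z, ↑(Ultrafilter.map f u) ≤ nhds z

/-- The Comfort preorder: `u ≤_C v` iff every `v`-compact space is `u`-compact. -/
def ComfortLE {X Y : Type*} (u : Ultrafilter X) (v : Ultrafilter Y) : Prop :=
  ∀ (Z : Type*) [TopologicalSpace Z], UCompact v Z → UCompact u Z

open Filter Set Topology

theorem Ultrafilter.extend_eq_bind {α β : Type*} (f : α → Ultrafilter β) (v : Ultrafilter α) :
    Ultrafilter.extend f v = v.bind f := by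
  rw [ultrafilter_extend_eq_iff, ultrafilter_converges_iff]
  rfl

theorem range_ultrafilter_extend {α γ : Type*} [TopologicalSpace γ] [T2Space γ] [CompactSpace γ]
    (f : α → γ) : range (Ultrafilter.extend f) = closure (range f) := by
  have hcont := continuous_ultrafilter_extend f
  apply (closure_minimal _ (isCompact_range hcont).isClosed).antisymm'
  · simpa [← range_comp, ultrafilter_extend_extends] using
      hcont.range_subset_closure_image_dense denseRange_pure
  · rintro _ ⟨a, rfl⟩
    exact ⟨pure a, ultrafilter_extend_pure f a⟩

theorem Ultrafilter.bind_congr {α β : Type*} {v : Ultrafilter α} {f g : α → Ultrafilter β}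
    (h : ∀ᶠ i in (v : Filter α), f i = g i) : v.bind f = v.bind g := by
  ext s
  change {i | s ∈ f i} ∈ v ↔ {i | s ∈ g i} ∈ v
  exact eventually_congr (h.mono fun i hi => by rw [hi])

theorem Ultrafilter.exists_or_of_mem_or_mem {α : Type*} {v : Ultrafilter α} {p q : α → Prop}
    (h : {i | p i} ∈ v ∨ {i | q i} ∈ v) : ∃ i, p i ∨ q i :=
  h.elim (fun hp => (v.nonempty_of_mem hp).imp fun _ => Or.inl)
    (fun hq => (v.nonempty_of_mem hq).imp fun _ => Or.inr)

theorem tensor_map_eq_bind {X Y Z : Type*} (g : X × Y → Z) (v : Ultrafilter X)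
    (w : Ultrafilter Y) :
    (tensor v w).map g = v.bind fun i => w.map fun j => g (i, j) :=
  rfl

theorem Set.Infinite.exists_nonprincipal_mem {α : Type*} {A : Set α} (hA : A.Infinite) :
    ∃ w : Ultrafilter α, ¬ IsPrincipal w ∧ A ∈ w := by
  have := hA.cofinite_inf_principal_neBot
  obtain ⟨w, hw⟩ := exists_ultrafilter_le (cofinite ⊓ 𝓟 A)
  refine ⟨w, ?_, hw (mem_inf_of_right (mem_principal_self A))⟩
  rintro ⟨x, rfl⟩
  exact hw (mem_inf_of_left (finite_singleton x).compl_mem_cofinite) rfl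

theorem exists_nonprincipal_ne (u : Ultrafilter ℕ) :
    ∃ w : Ultrafilter ℕ, ¬ IsPrincipal w ∧ w ≠ u := by
  obtain ⟨A, hAinf, hAu⟩ : ∃ A : Set ℕ, A.Infinite ∧ A ∉ u := by
    by_cases he : {n | Even n} ∈ u
    · refine ⟨{n | Even n}ᶜ, infinite_of_forall_exists_gt fun a => ⟨2 * a + 1, ?_, by omega⟩,
        u.compl_notMem_iff.mpr he⟩
      simp
    · refine ⟨{n | Even n}, infinite_of_forall_exists_gt fun a => ⟨2 * a + 2, ?_, by omega⟩, he⟩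
      simp [Nat.even_add]
  obtain ⟨w, hw, hAw⟩ := hAinf.exists_nonprincipal_mem
  exact ⟨w, hw, fun h => hAu (h ▸ hAw)⟩

theorem Ultrafilter.exists_map_getD_eq {β : Type*} (d : β) (f : ℕ → Ultrafilter β) :
    ∃ W : Ultrafilter (List β), ∀ i, W.map (fun l => l.getD i d) = f i := by
  let F := (atTop ×ˢ Filter.pi fun i => (f i : Filter β)).map
    fun p : ℕ × (ℕ → β) => (List.range p.1).map p.2
  obtain ⟨W, hW⟩ := exists_ultrafilter_le F
  refine ⟨W, fun i => Ultrafilter.coe_le_coe.mp (Tendsto.mono_left ?_ hW)⟩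
  have hprefix : ∀ᶠ p : ℕ × (ℕ → β) in atTop ×ˢ Filter.pi fun i => (f i : Filter β),
      p.2 i = ((List.range p.1).map p.2).getD i d :=
    (tendsto_fst.eventually (eventually_gt_atTop i)).mono fun p hp => by simp [hp]
  exact tendsto_map'_iff.mpr (((tendsto_eval_pi _ i).comp tendsto_snd).congr' hprefix)

theorem exists_forall_map_section_eq (f : ℕ → Ultrafilter ℕ) :
    ∃ (g : ℕ × ℕ → ℕ) (w : Ultrafilter ℕ), ∀ i, w.map (fun j => g (i, j)) = f i := by
  obtain ⟨W, hW⟩ := Ultrafilter.exists_map_getD_eq 0 f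
  let e : List ℕ ≃ ℕ := Denumerable.eqv (List ℕ)
  refine ⟨fun p => (e.symm p.2).getD p.1 0, W.map e, fun i => ?_⟩
  rw [Ultrafilter.map_map, ← hW i]
  congr 1
  funext l
  simp

section WeakPPoint

variable {u : Ultrafilter ℕ}

theorem WeakPPoint.exists_of_extend_eq (hW : WeakPPoint u) {f : ℕ → Ultrafilter ℕ}
    {v : Ultrafilter ℕ} (hfv : Ultrafilter.extend f v = u) :
    ∃ i, f i = u ∨ IsPrincipal (f i) := by
  by_contra! hf
  refine hW.2 (range f) (countable_range f) (fun ⟨i, hi⟩ => (hf i).1 hi)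
    (forall_mem_range.mpr fun i => (hf i).2) ?_
  exact range_ultrafilter_extend f ▸ ⟨v, hfv⟩

theorem weakPPoint_of_forall_extend (hu : ¬ IsPrincipal u)
    (h : ∀ (f : ℕ → Ultrafilter ℕ) (v : Ultrafilter ℕ),
      Ultrafilter.extend f v = u → ∃ i, f i = u ∨ IsPrincipal (f i)) :
    WeakPPoint u := by
  refine ⟨hu, fun A hA huA hAnp huA' => ?_⟩
  obtain ⟨f, rfl⟩ := hA.exists_eq_range (Nonempty.of_closure ⟨u, huA'⟩)
  obtain ⟨v, hv⟩ : u ∈ range (Ultrafilter.extend f) := range_ultrafilter_extend f ▸ huA'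
  obtain ⟨i, hi | hi⟩ := h f v hv
  · exact huA ⟨i, hi⟩
  · exact hAnp (f i) ⟨i, rfl⟩ hi

theorem WeakPPoint.mem_or_mem_of_extend_eq (hW : WeakPPoint u) {f : ℕ → Ultrafilter ℕ}
    {v : Ultrafilter ℕ} (hfv : Ultrafilter.extend f v = u) :
    {i | f i = u} ∈ v ∨ {i | IsPrincipal (f i)} ∈ v := by
  classical
  rw [← Ultrafilter.union_mem_iff]
  by_contra hbad
  obtain ⟨w, hw, hwu⟩ := exists_nonprincipal_ne u
  let f' i := if f i = u ∨ IsPrincipal (f i) then w else f i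
  have hf'v : Ultrafilter.extend f' v = u := by
    rw [Ultrafilter.extend_eq_bind] at hfv ⊢
    rw [← hfv]
    exact Ultrafilter.bind_congr <|
      Filter.mem_of_superset (v.compl_mem_iff_notMem.mpr hbad) fun i hi => if_neg hi
  obtain ⟨i, hi⟩ := hW.exists_of_extend_eq hf'v
  dsimp only [f'] at hi
  split_ifs at hi with hfi
  · exact hi.elim hwu hw
  · exact hfi hi

theorem WeakPPoint.mem_or_mem_of_eq_tensor_map (hW : WeakPPoint u) {g : ℕ × ℕ → ℕ}
    {v w : Ultrafilter ℕ} (hg : u = (tensor v w).map g) :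
    {i | w.map (fun j => g (i, j)) = u} ∈ v ∨ {i | IsPrincipal (w.map fun j => g (i, j))} ∈ v :=
  hW.mem_or_mem_of_extend_eq (by rw [Ultrafilter.extend_eq_bind, hg, tensor_map_eq_bind])

theorem weakPPoint_of_forall_tensor_map (hu : ¬ IsPrincipal u)
    (h : ∀ (g : ℕ × ℕ → ℕ) (v w : Ultrafilter ℕ), u = (tensor v w).map g →
      ∃ i, w.map (fun j => g (i, j)) = u ∨ IsPrincipal (w.map fun j => g (i, j))) :
    WeakPPoint u := by
  refine weakPPoint_of_forall_extend hu fun f v hfv => ?_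
  obtain ⟨g, w, hgw⟩ := exists_forall_map_section_eq f
  obtain ⟨i, hi⟩ := h g v w (by
    rw [tensor_map_eq_bind, ← hfv, Ultrafilter.extend_eq_bind]
    exact congrArg v.bind (funext hgw).symm)
  exact ⟨i, hgw i ▸ hi⟩

end WeakPPoint

theorem stmt2 (u : Ultrafilter ℕ) (hu : ¬ IsPrincipal u) :
    (WeakPPoint u ↔ ∀ (f : ℕ → Ultrafilter ℕ) (v : Ultrafilter ℕ),
        Ultrafilter.extend f v = u → ∃ i : ℕ, f i = u ∨ IsPrincipal (f i)) ∧
    (WeakPPoint u ↔ ∀ (f : ℕ → Ultrafilter ℕ) (v : Ultrafilter ℕ),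
        Ultrafilter.extend f v = u →
        {i : ℕ | f i = u} ∈ v ∨ {i : ℕ | IsPrincipal (f i)} ∈ v) ∧
    (WeakPPoint u ↔ ∀ (g : ℕ × ℕ → ℕ) (v w : Ultrafilter ℕ),
        u = Ultrafilter.map g (tensor v w) →
        ∃ i : ℕ, Ultrafilter.map (fun j => g (i, j)) w = u ∨
          IsPrincipal (Ultrafilter.map (fun j => g (i, j)) w)) ∧
    (WeakPPoint u ↔ ∀ (g : ℕ × ℕ → ℕ) (v w : Ultrafilter ℕ),
        u = Ultrafilter.map g (tensor v w) →
        {i : ℕ | Ultrafilter.map (fun j => g (i, j)) w = u} ∈ v ∨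
        {i : ℕ | IsPrincipal (Ultrafilter.map (fun j => g (i, j)) w)} ∈ v) := by
  refine ⟨⟨fun hW _ _ => hW.exists_of_extend_eq, weakPPoint_of_forall_extend hu⟩,
    ⟨fun hW _ _ => hW.mem_or_mem_of_extend_eq, fun h => weakPPoint_of_forall_extend hu
      fun f v hfv => Ultrafilter.exists_or_of_mem_or_mem (h f v hfv)⟩,
    ⟨fun hW _ _ _ hg => Ultrafilter.exists_or_of_mem_or_mem (hW.mem_or_mem_of_eq_tensor_map hg),
      weakPPoint_of_forall_tensor_map hu⟩,
    ⟨fun hW _ _ _ => hW.mem_or_mem_of_eq_tensor_map, fun h => weakPPoint_of_forall_tensor_map hu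
      fun g v w hg => Ultrafilter.exists_or_of_mem_or_mem (h g v w hg)⟩⟩
end

section
/- If u ∈ βℕ is a weak P-point, v, w ∈ βℕ, and u ≤_RK v ⊗ w, then u ≤_RK v or u ≤_RK w. -/
/-!
Write `u = f_* (v ⊗ w)` as the `v`-limit of the ultrafilters `u_n = (f (n, ·))_* w`, i.e.
`u = v.bind (n ↦ u_n)`. If `u_n = u` for `v`-many `n`, then `u ≤_RK w`; if `u_n` is principal,
say `u_n = pure (g n)`, for `v`-many `n`, then `u = g_* v`. Otherwise `u` is a limit of the
countable set of the remaining `u_n`, which are nonprincipal and different from `u`; a weak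
P-point is not.
-/

open Filter Topology

namespace Ultrafilter

variable {α β γ : Type*}

theorem mem_bind {f : Ultrafilter α} {m : α → Ultrafilter β} {s : Set β} :
    s ∈ f.bind m ↔ {x | s ∈ m x} ∈ f :=
  Iff.rfl

theorem map_tensor (v : Ultrafilter α) (w : Ultrafilter β) (f : α × β → γ) :
    (tensor v w).map f = v.bind fun x => w.map fun y => f (x, y) :=
  rfl

theorem map_le_nhds_bind (f : Ultrafilter α) (m : α → Ultrafilter β) :
    ↑(f.map m) ≤ 𝓝 (f.bind m) :=
  ultrafilter_converges_iff.mpr rfl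

theorem bind_eq_map_of_eventually_eq_pure {f : Ultrafilter α} {m : α → Ultrafilter β}
    {g : α → β} (h : ∀ᶠ x in f, m x = pure (g x)) : f.bind m = f.map g := by
  ext s
  rw [mem_bind, mem_map]
  exact Filter.congr_sets (h.mono fun x hx => by simp [hx])

end Ultrafilter

theorem rkle_bind_of_eventually_isPrincipal {α β : Type*} {f : Ultrafilter α}
    {m : α → Ultrafilter β} (h : ∀ᶠ x in f, IsPrincipal (m x)) : RKLE (f.bind m) f := by
  have hchoice : ∀ x, ∃ y, IsPrincipal (m x) → m x = pure y := fun x => by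
    by_cases hx : IsPrincipal (m x)
    · obtain ⟨y, hy⟩ := hx
      exact ⟨y, fun _ => hy⟩
    · obtain ⟨y, -⟩ := (m x).nonempty_of_mem univ_mem
      exact ⟨y, fun hx' => absurd hx' hx⟩
  choose g hg using hchoice
  exact ⟨g, (Ultrafilter.bind_eq_map_of_eventually_eq_pure (h.mono hg)).symm⟩

theorem WeakPPoint.eventually_eq_or_isPrincipal {u : Ultrafilter ℕ} (hu : WeakPPoint u)
    {ι : Type*} [Countable ι] {f : Ultrafilter ι} {m : ι → Ultrafilter ℕ} (h : f.bind m = u) :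
    ∀ᶠ i in f, m i = u ∨ IsPrincipal (m i) := by
  by_contra hbad
  set S := {i | ¬(m i = u ∨ IsPrincipal (m i))}
  have hS : S ∈ f := Ultrafilter.eventually_not.mpr hbad
  refine hu.2 (m '' S) (S.to_countable.image m) ?_ ?_ ?_
  · rintro ⟨i, hi, rfl⟩
    exact hi (Or.inl rfl)
  · rintro _ ⟨i, hi, rfl⟩
    exact fun hp => hi (Or.inr hp)
  · refine mem_closure_iff_ultrafilter.mpr ⟨f.map m, ?_, h ▸ f.map_le_nhds_bind m⟩
    exact Ultrafilter.mem_map.mpr (Filter.mem_of_superset hS (Set.subset_preimage_image m S))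

theorem stmt3 (u v w : Ultrafilter ℕ) (hu : WeakPPoint u)
    (h : RKLE u (tensor v w)) : RKLE u v ∨ RKLE u w := by
  obtain ⟨f, hf⟩ := h
  have hbind : (v.bind fun n => w.map fun k => f (n, k)) = u := by
    rw [← hf, Ultrafilter.map_tensor]
  rcases Ultrafilter.eventually_or.mp (hu.eventually_eq_or_isPrincipal hbind) with heq | hprin
  · obtain ⟨n, hn⟩ := heq.exists
    exact Or.inr ⟨_, hn⟩
  · exact Or.inl (hbind ▸ rkle_bind_of_eventually_isPrincipal hprin)
end

section
/- Let u ∈ βℕ be a weak P-point, n ∈ ℕ, e a function from the (n+1)-fold product ℕ × ⋯ × ℕ to ℕ, and v₀, …, vₙ ∈ βℕ. If u ≤_RK Ultrafilter.map e (v₀ ⊗ ⋯ ⊗ vₙ) (the ultrafilter extension of e evaluated at v₀, …, vₙ, where v₀ ⊗ ⋯ ⊗ vₙ is the left-associated iterated tensor product), then u ≤_RK v_k for some 0 ≤ k ≤ n. -/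
/-- The `(n+1)`-fold left-associated product type `ℕ × ⋯ × ℕ`. -/
def iterType : ℕ → Type
  | 0 => ℕ
  | n + 1 => iterType n × ℕ

/-- The left-associated iterated tensor product `v₀ ⊗ ⋯ ⊗ vₙ`. -/
def iterTensor (v : ℕ → Ultrafilter ℕ) : (n : ℕ) → Ultrafilter (iterType n)
  | 0 => v 0
  | n + 1 => tensor (iterTensor v n) (v (n + 1))

/-!
Write `u = map g (w ⊗ v)` as the `w`-limit `w.bind H` of the ultrafilters
`H x = map (g (x, ·)) v`. If some `H x` equals `u`, then `u ≤_RK v`. If `w`-almost every `H x` is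
principal, say `H x = pure (m x)`, then `u = map m w`. Otherwise `u` lies in the closure of the
countable set of nonprincipal `H x`, which a weak P-point forbids. Induction on the number of
factors handles `v₀ ⊗ ⋯ ⊗ vₙ = (v₀ ⊗ ⋯ ⊗ vₙ₋₁) ⊗ vₙ`.
-/

open Filter

namespace Ultrafilter

variable {X Y : Type*}

theorem mem_bind_s5 {w : Ultrafilter X} {H : X → Ultrafilter Y} {s : Set Y} :
    s ∈ w.bind H ↔ {x | s ∈ H x} ∈ w :=
  Iff.rfl

theorem bind_mem_closure_image (w : Ultrafilter X) (H : X → Ultrafilter Y) {S : Set X}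
    (hS : S ∈ w) : w.bind H ∈ closure (H '' S) := by
  rw [ultrafilterBasis_is_basis.mem_closure_iff]
  rintro _ ⟨s, rfl⟩ hs
  obtain ⟨x, hxs, hxS⟩ := w.nonempty_of_mem (inter_mem (mem_bind_s5.1 hs) hS)
  exact ⟨H x, hxs, x, hxS, rfl⟩

theorem bind_eq_map_of_eventually_eq_pure_s5 {w : Ultrafilter X} {H : X → Ultrafilter Y}
    {m : X → Y} (h : ∀ᶠ x in w, H x = pure (m x)) : w.bind H = w.map m := by
  ext s
  rw [mem_bind_s5, mem_map]
  exact eventually_congr (h.mono fun x hx => by simp [hx])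

theorem rkle_bind_of_eventually_isPrincipal {w : Ultrafilter X} {H : X → Ultrafilter Y}
    (h : ∀ᶠ x in w, IsPrincipal (H x)) : RKLE (w.bind H) w := by
  have : ∀ x, ∃ y, IsPrincipal (H x) → H x = pure y := fun x => by
    by_cases hx : IsPrincipal (H x)
    · exact hx.imp fun _ hy _ => hy
    · exact ⟨(H x).nonempty_of_mem univ_mem |>.some, (absurd · hx)⟩
  choose m hm using this
  exact ⟨m, (bind_eq_map_of_eventually_eq_pure_s5 (h.mono hm)).symm⟩

end Ultrafilter

theorem map_tensor_eq_bind {X Y Z : Type*} (w : Ultrafilter X) (v : Ultrafilter Y)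
    (g : X × Y → Z) : (tensor w v).map g = w.bind fun x => v.map fun y => g (x, y) := by
  ext s
  rfl

theorem RKLE.of_map {X Y Z : Type*} {u : Ultrafilter X} {t : Ultrafilter Y} {e : Y → Z}
    (h : RKLE u (t.map e)) : RKLE u t := by
  obtain ⟨f, rfl⟩ := h
  exact ⟨f ∘ e, Ultrafilter.map_map t e f⟩

instance iterType.instCountable : ∀ n, Countable (iterType n)
  | 0 => inferInstanceAs (Countable ℕ)
  | n + 1 => have := iterType.instCountable n; inferInstanceAs (Countable (iterType n × ℕ))

namespace WeakPPoint

variable {u : Ultrafilter ℕ}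

theorem exists_eq_of_bind_eq (hu : WeakPPoint u) {X : Type*} [Countable X] {w : Ultrafilter X}
    {H : X → Ultrafilter ℕ} (hwH : w.bind H = u) (hw : ∀ᶠ x in w, ¬ IsPrincipal (H x)) :
    ∃ x, H x = u := by
  by_contra! hne
  refine hu.2 (H '' {x | ¬ IsPrincipal (H x)}) (Set.countable_range H |>.mono
    (Set.image_subset_range _ _)) ?_ ?_ (hwH ▸ w.bind_mem_closure_image H hw)
  · rintro ⟨x, -, hx⟩
    exact hne x hx
  · rintro _ ⟨x, hx, rfl⟩
    exact hx

theorem rkle_or_rkle_of_rkle_tensor (hu : WeakPPoint u) {X Y : Type*} [Countable X]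
    {w : Ultrafilter X} {v : Ultrafilter Y} (h : RKLE u (tensor w v)) :
    RKLE u w ∨ RKLE u v := by
  obtain ⟨g, hg⟩ := h
  rw [map_tensor_eq_bind] at hg
  rcases w.em fun x => IsPrincipal (v.map fun y => g (x, y)) with hp | hnp
  · exact .inl (hg ▸ Ultrafilter.rkle_bind_of_eventually_isPrincipal hp)
  · obtain ⟨x, hx⟩ := hu.exists_eq_of_bind_eq hg hnp
    exact .inr ⟨_, hx⟩

theorem exists_rkle_of_rkle_iterTensor (hu : WeakPPoint u) (v : ℕ → Ultrafilter ℕ) (n : ℕ)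
    (h : RKLE u (iterTensor v n)) : ∃ k ≤ n, RKLE u (v k) := by
  induction n with
  | zero => exact ⟨0, le_rfl, h⟩
  | succ n ih =>
    rcases hu.rkle_or_rkle_of_rkle_tensor h with h | h
    · obtain ⟨k, hk, hr⟩ := ih h
      exact ⟨k, hk.trans n.le_succ, hr⟩
    · exact ⟨n + 1, le_rfl, h⟩

end WeakPPoint

theorem stmt5 (u : Ultrafilter ℕ) (hu : WeakPPoint u) (n : ℕ) (e : iterType n → ℕ)
    (v : ℕ → Ultrafilter ℕ) (h : RKLE u (Ultrafilter.map e (iterTensor v n))) :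
    ∃ k ≤ n, RKLE u (v k) :=
  hu.exists_rkle_of_rkle_iterTensor v n h.of_map
end

section
/- Let w ∈ βℕ and let f : ℕ → βℕ be injective with discrete range (as a subspace of βℕ) such that f(i) ≅ w for every i ∈ ℕ. Then for every v ∈ βℕ, f̃(v) ≅ v ⊗ w (an isomorphism between an ultrafilter on ℕ and an ultrafilter on ℕ × ℕ). -/
open Set Function

namespace Ultrafilter

variable {α β γ : Type*}

theorem map_congr {u : Ultrafilter α} {g g' : α → β} (h : ∀ᶠ x in u, g x = g' x) :
    u.map g = u.map g' :=
  coe_injective <| by simpa only [coe_map] using Filter.map_congr h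

theorem map_bind (u : Ultrafilter α) (m : α → Ultrafilter β) (g : β → γ) :
    (u.bind m).map g = u.bind fun x => (m x).map g :=
  rfl

theorem bind_congr_s10 {u : Ultrafilter α} {m m' : α → Ultrafilter β} (h : ∀ᶠ x in u, m x = m' x) :
    u.bind m = u.bind m' :=
  ext fun s => Filter.eventually_congr <| h.mono fun x hx => by simp only [hx]

theorem extend_eq_bind_s10 (f : α → Ultrafilter β) (v : Ultrafilter α) :
    Ultrafilter.extend f v = v.bind f := by
  rw [ultrafilter_extend_eq_iff, ultrafilter_converges_iff]
  rfl

theorem exists_mem_infinite_compl (v : Ultrafilter ℕ) : ∃ V ∈ v, Vᶜ.Infinite := by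
  set E := range fun k : ℕ => 2 * k
  have hE : E.Infinite := infinite_range_of_injective fun a b h => by simpa using h
  have hEc : Eᶜ.Infinite := by
    refine (infinite_range_of_injective (f := fun k : ℕ => 2 * k + 1) fun a b h => by
      simpa using h).mono ?_
    rintro _ ⟨k, rfl⟩ ⟨l, hl⟩
    dsimp only at hl
    omega
  by_cases h : E ∈ v
  · exact ⟨E, h, hEc⟩
  · exact ⟨Eᶜ, compl_mem_iff_notMem.2 h, by rwa [compl_compl]⟩

theorem exists_mem_forall_ne_notMem {ι : Type*} {f : ι → Ultrafilter α} (hinj : Injective f)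
    [DiscreteTopology (range f)] (i : ι) : ∃ A ∈ f i, ∀ j ≠ i, A ∉ f j := by
  obtain ⟨U, hU, hUi⟩ := isOpen_induced_iff.1 (isOpen_discrete {(⟨f i, i, rfl⟩ : range f)})
  have hfi : f i ∈ U := by
    change (⟨f i, i, rfl⟩ : range f) ∈ Subtype.val ⁻¹' U
    rw [hUi]
    rfl
  obtain ⟨_, ⟨A, rfl⟩, hA, hAU⟩ := ultrafilterBasis_is_basis.exists_subset_of_mem_open hfi hU
  refine ⟨A, hA, fun j hji hAj => hji (hinj ?_)⟩
  have : (⟨f j, j, rfl⟩ : range f) ∈ Subtype.val ⁻¹' U := hAU hAj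
  rw [hUi, mem_singleton_iff, Subtype.ext_iff] at this
  exact this

theorem exists_pairwise_disjoint_mem {ι : Type*} [LinearOrder ι] [LocallyFiniteOrderBot ι]
    {f : ι → Ultrafilter α} (hinj : Injective f) [DiscreteTopology (range f)] :
    ∃ B : ι → Set α, (∀ i, B i ∈ f i) ∧ Pairwise (Disjoint on B) := by
  choose A hA hAsep using exists_mem_forall_ne_notMem hinj
  refine ⟨disjointed A, fun i => ?_, disjoint_disjointed A⟩
  rw [disjointed_eq_inter_compl]
  exact Filter.inter_mem (hA i) <| (Filter.biInter_mem (finite_Iio i)).2 fun j hj =>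
    compl_mem_iff_notMem.2 <| hAsep j i hj.ne'

end Ultrafilter

theorem Set.BijOn.exists_equiv_extend_of_infinite_compl {X Y : Type*} [Countable X] [Countable Y]
    {S : Set X} {T : Set Y} {φ : X → Y} (hφ : BijOn φ S T) (hS : Sᶜ.Infinite)
    (hT : Tᶜ.Infinite) : ∃ h : X ≃ Y, EqOn h φ S := by
  classical
  have := hS.to_subtype
  have := hT.to_subtype
  obtain ⟨e⟩ : Nonempty (↥Sᶜ ≃ ↥Tᶜ) := nonempty_equiv_of_countable
  refine ⟨(Equiv.Set.sumCompl S).symm.trans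
    ((Equiv.sumCongr (hφ.equiv φ) e).trans (Equiv.Set.sumCompl T)), fun x hx => ?_⟩
  simp only [Equiv.trans_apply, Equiv.Set.sumCompl_symm_apply_of_mem hx, Equiv.sumCongr_apply,
    Sum.map_inl, Equiv.Set.sumCompl_apply_inl]
  rfl

section PairwiseDisjoint

variable {ι α β : Type*} {B : ι → Set α}

theorem bijOn_uncurry_of_pairwise_disjoint {g : ι → β → α} (hg : ∀ i, Bijective (g i))
    (hB : Pairwise (Disjoint on B)) (V : Set ι) :
    BijOn (uncurry g) {p | p.1 ∈ V ∧ uncurry g p ∈ B p.1} (⋃ i ∈ V, B i) := by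
  refine ⟨fun p hp => mem_biUnion hp.1 hp.2, ?_, fun x hx => ?_⟩
  · rintro ⟨i, n⟩ ⟨-, hn : g i n ∈ B i⟩ ⟨j, m⟩ ⟨-, hm : g j m ∈ B j⟩ (hnm : g i n = g j m)
    obtain rfl : i = j := by
      by_contra hij
      exact disjoint_left.1 (hB hij) hn (hnm ▸ hm)
    rw [(hg i).1 hnm]
  · obtain ⟨i, hi, hx⟩ := mem_iUnion₂.1 hx
    obtain ⟨n, rfl⟩ := (hg i).2 x
    exact ⟨(i, n), ⟨hi, hx⟩, rfl⟩

theorem infinite_compl_biUnion_of_pairwise_disjoint (hB : Pairwise (Disjoint on B))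
    (hne : ∀ i, (B i).Nonempty) {V : Set ι} (hV : Vᶜ.Infinite) : (⋃ i ∈ V, B i)ᶜ.Infinite := by
  have hinj : Injective B := fun i j hBij => by
    by_contra hij
    exact (hB hij).ne (hne i).ne_empty hBij
  refine (hV.biUnion hinj.injOn).mono fun x hx hxV => ?_
  obtain ⟨i, hi, hxi⟩ := mem_iUnion₂.1 hx
  obtain ⟨j, hj, hxj⟩ := mem_iUnion₂.1 hxV
  exact disjoint_left.1 (hB (ne_of_mem_of_not_mem hj hi).symm) hxi hxj

end PairwiseDisjoint

theorem uIso_bind_tensor_of_pairwise_disjoint {α β : Type*} [Countable α] [Countable β]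
    {f : ℕ → Ultrafilter α} {B : ℕ → Set α} (hB : ∀ i, B i ∈ f i)
    (hdisj : Pairwise (Disjoint on B)) {w : Ultrafilter β} (hiso : ∀ i, UIso (f i) w)
    (v : Ultrafilter ℕ) : UIso (v.bind f) (tensor v w) := by
  choose g hg hgw using hiso
  obtain ⟨V, hV, hVc⟩ := v.exists_mem_infinite_compl
  have hgB : ∀ i, g i ⁻¹' B i ∈ w := fun i => by
    simpa only [← hgw i, Ultrafilter.mem_map] using hB i
  have hSc : {p : ℕ × β | p.1 ∈ V ∧ uncurry g p ∈ B p.1}ᶜ.Infinite :=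
    (hVc.prod_left (w.nonempty_of_mem Filter.univ_mem)).mono fun p hp hpS => hp.1 hpS.1
  have hTc := infinite_compl_biUnion_of_pairwise_disjoint hdisj
    (fun i => Ultrafilter.nonempty_of_mem (hB i)) hVc
  obtain ⟨h, hh⟩ :=
    (bijOn_uncurry_of_pairwise_disjoint hg hdisj V).exists_equiv_extend_of_infinite_compl hSc hTc
  refine ⟨h, h.bijective, ?_⟩
  rw [tensor, Ultrafilter.map_bind]
  refine Ultrafilter.bind_congr_s10 ?_
  filter_upwards [hV] with i hi
  rw [Ultrafilter.map_map, ← hgw i]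
  refine Ultrafilter.map_congr ?_
  filter_upwards [hgB i] with n hn using hh ⟨hi, hn⟩

theorem stmt10 (w : Ultrafilter ℕ) (f : ℕ → Ultrafilter ℕ)
    (hinj : Function.Injective f)
    (hdisc : DiscreteTopology (Set.range f))
    (hiso : ∀ i : ℕ, UIso (f i) w) :
    ∀ v : Ultrafilter ℕ, UIso (Ultrafilter.extend f v) (tensor v w) := by
  intro v
  obtain ⟨B, hB, hdisj⟩ := Ultrafilter.exists_pairwise_disjoint_mem hinj
  rw [Ultrafilter.extend_eq_bind_s10]
  exact uIso_bind_tensor_of_pairwise_disjoint hB hdisj hiso v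
end

section
/- Fix a ladder system on ω₁. Let u = (u_α)_{α<ω₁} be a sequence of weak P-points in βℕ. Let X, Y ⊆ ω₁, let f^X and f^Y be admissible families for the X-modification u^X and the Y-modification u^Y respectively, and write v_{X,α} := f̃^X_α(u^X_α) and v_{Y,α} := f̃^Y_α(u^Y_α). Then for all α, β < ω₁, if v_{X,α} ≤_C v_{Y,β}, then for each γ ∈ X with γ ≤ α there exists δ ≤ β with δ ∈ Y ∪ Lim(ω₁) such that u_γ ≤_RK u_δ. -/
/-- The first uncountable ordinal `ω₁`. -/
noncomputable def omega1 : Ordinal := (Cardinal.aleph 1).ord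

/-- A ladder system on `ω₁`: for each nonzero limit `α < ω₁`, a strictly increasing
`ω`-sequence of ordinals cofinal in `α`. -/
def IsLadderSystem (L : Ordinal → ℕ → Ordinal) : Prop :=
  ∀ α : Ordinal, α < omega1 → Order.IsSuccLimit α →
    StrictMono (L α) ∧ (∀ i : ℕ, L α i < α) ∧ ∀ β < α, ∃ i : ℕ, β ≤ L α i

/-- `vSeq u f α = f̃_α(u_α)`. -/
noncomputable def vSeq (u : Ordinal → Ultrafilter ℕ) (f : Ordinal → ℕ → Ultrafilter ℕ)
    (α : Ordinal) : Ultrafilter ℕ :=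
  Ultrafilter.extend (f α) (u α)

/-- `(f_α)_{α<ω₁}` is admissible for `u = (u_α)_{α<ω₁}` (w.r.t. the ladder system `L`):
writing `v_α := f̃_α(u_α)`, the map `f_0` is injective with principal values; at a successor
`β+1`, `f_{β+1}` is injective with discrete range and all values isomorphic to `v_β`; at a
nonzero limit `α`, `f_α` is injective with discrete range and `f_α(i) ≅ v_{α_i}`. -/
def Admissible (L : Ordinal → ℕ → Ordinal) (u : Ordinal → Ultrafilter ℕ)
    (f : Ordinal → ℕ → Ultrafilter ℕ) : Prop :=
  (Function.Injective (f 0) ∧ ∀ i : ℕ, IsPrincipal (f 0 i)) ∧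
  (∀ β : Ordinal, β + 1 < omega1 →
    Function.Injective (f (β + 1)) ∧ DiscreteTopology (Set.range (f (β + 1))) ∧
    ∀ i : ℕ, UIso (f (β + 1) i) (vSeq u f β)) ∧
  ∀ α : Ordinal, α < omega1 → Order.IsSuccLimit α →
    Function.Injective (f α) ∧ DiscreteTopology (Set.range (f α)) ∧
    ∀ i : ℕ, UIso (f α i) (vSeq u f (L α i))

open Classical in
/-- The `X`-modification of `u`: keep `u_α` for `α ∈ X ∪ Lim(ω₁)` and replace the
remaining values by the principal ultrafilter `pure 0`. -/
noncomputable def modif (u : Ordinal → Ultrafilter ℕ) (X : Set Ordinal)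
    (α : Ordinal) : Ultrafilter ℕ :=
  if α ∈ X ∨ (Order.IsSuccLimit α ∧ α < omega1) then u α else pure 0


open Filter Set Topology

universe u

section Ultrafilters

variable {α β ι : Type*}

theorem RKLE.refl (u : Ultrafilter α) : RKLE u u := ⟨id, Ultrafilter.map_id u⟩

theorem RKLE.trans {u : Ultrafilter α} {v : Ultrafilter β} {w : Ultrafilter ι}
    (huv : RKLE u v) (hvw : RKLE v w) : RKLE u w := by
  obtain ⟨f, rfl⟩ := huv
  obtain ⟨g, rfl⟩ := hvw
  exact ⟨f ∘ g, Ultrafilter.map_map w g f⟩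

theorem UIso.rkle {u : Ultrafilter α} {v : Ultrafilter β} (h : UIso u v) : RKLE u v :=
  ⟨h.choose, h.choose_spec.2⟩

theorem UIso.symm {u : Ultrafilter α} {v : Ultrafilter β} (h : UIso u v) : UIso v u := by
  obtain ⟨f, hf, rfl⟩ := h
  let e := Equiv.ofBijective f hf
  refine ⟨e.symm, e.symm.bijective, ?_⟩
  rw [Ultrafilter.map_map, show e.symm ∘ f = id from funext e.symm_apply_apply,
    Ultrafilter.map_id]

theorem IsPrincipal.of_rkle {u : Ultrafilter α} {v : Ultrafilter β} (h : RKLE u v)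
    (hv : IsPrincipal v) : IsPrincipal u := by
  obtain ⟨f, rfl⟩ := h
  obtain ⟨b, rfl⟩ := hv
  exact ⟨f b, Ultrafilter.map_pure f b⟩

theorem UCompact.of_rkle {u : Ultrafilter α} {v : Ultrafilter β} {Z : Type*} [TopologicalSpace Z]
    (h : RKLE u v) (hv : UCompact v Z) : UCompact u Z := by
  obtain ⟨m, rfl⟩ := h
  intro f
  obtain ⟨z, hz⟩ := hv (f ∘ m)
  exact ⟨z, by rwa [Ultrafilter.map_map]⟩

theorem UCompact.of_homeomorph {u : Ultrafilter α} {Z W : Type*} [TopologicalSpace Z]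
    [TopologicalSpace W] (e : Z ≃ₜ W) (h : UCompact u Z) : UCompact u W := by
  intro f
  obtain ⟨z, hz⟩ := h (e.symm ∘ f)
  refine ⟨e z, ?_⟩
  have hf : f = e ∘ e.symm ∘ f := by ext; simp
  rw [hf, ← Ultrafilter.map_map, Ultrafilter.coe_map]
  exact (Filter.map_mono hz).trans (e.continuous.tendsto z)

theorem RKLE.comfortLE {u : Ultrafilter α} {v : Ultrafilter β} (h : RKLE u v) : ComfortLE u v :=
  fun _ _ hv => hv.of_rkle h

theorem ComfortLE.trans {p : Ultrafilter α} {q : Ultrafilter β} {r : Ultrafilter ι}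
    (hpq : ComfortLE.{_, _, u} p q) (hqr : ComfortLE.{_, _, u} q r) : ComfortLE.{_, _, u} p r :=
  fun Z _ hr => hpq Z (hqr Z hr)

namespace Ultrafilter

theorem extend_eq_bind_s14 (f : ι → Ultrafilter α) (w : Ultrafilter ι) : w.extend f = w.bind f := by
  rw [ultrafilter_extend_eq_iff, ultrafilter_converges_iff]
  rfl

theorem map_bind_s14 (m : α → β) (w : Ultrafilter ι) (f : ι → Ultrafilter α) :
    (w.bind f).map m = w.bind fun i => (f i).map m :=
  rfl

theorem bind_pure_comp (w : Ultrafilter ι) (k : ι → α) : w.bind (fun i => pure (k i)) = w.map k :=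
  rfl

theorem bind_const (w : Ultrafilter ι) (p : Ultrafilter α) : w.bind (fun _ => p) = p := by
  ext s
  change {_i | s ∈ p} ∈ w ↔ s ∈ p
  by_cases hs : s ∈ p
  · simp only [hs, ofPred_true, iff_true]
    exact univ_mem
  · simp [hs]

theorem bind_congr_s14 {w : Ultrafilter ι} {f g : ι → Ultrafilter α} (h : ∀ᶠ i in w, f i = g i) :
    w.bind f = w.bind g := by
  ext s
  exact Filter.eventually_congr (h.mono fun i hi => by simp only [hi])

theorem bind_mem_closure_image_s14 {w : Ultrafilter ι} {N : Set ι} (hN : N ∈ w)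
    (f : ι → Ultrafilter α) : w.bind f ∈ closure (f '' N) :=
  mem_closure_iff_ultrafilter.mpr
    ⟨w.map f, image_mem_map hN, ultrafilter_extend_eq_iff.mp (extend_eq_bind_s14 f w)⟩

end Ultrafilter

theorem not_uCompact_not_rkle {p : Ultrafilter α} (hp : ¬IsPrincipal p) :
    ¬UCompact p {r : Ultrafilter α // ¬RKLE p r} := by
  intro h
  obtain ⟨z, hz⟩ := h fun n => ⟨pure n, fun hn => hp (IsPrincipal.of_rkle hn ⟨n, rfl⟩)⟩
  rw [Ultrafilter.coe_map, ← Filter.Tendsto, tendsto_subtype_rng] at hz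
  have hzp : z.1 = p := tendsto_nhds_unique hz (Ultrafilter.tendsto_pure_self p)
  exact z.2 (hzp.symm ▸ RKLE.refl z.1)

end Ultrafilters

theorem WeakPPoint.rkle_or_exists_rkle_of_rkle_bind {p v : Ultrafilter ℕ} {f : ℕ → Ultrafilter ℕ}
    (hp : WeakPPoint p) (h : RKLE p (v.bind f)) : RKLE p v ∨ ∃ j, RKLE p (f j) := by
  obtain ⟨m, hm⟩ := h
  rw [Ultrafilter.map_bind_s14] at hm
  set g : ℕ → Ultrafilter ℕ := fun j => (f j).map m
  by_cases hprin : {j | IsPrincipal (g j)} ∈ v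
  · choose! k hk using fun j (hj : IsPrincipal (g j)) => hj
    refine .inl ⟨k, ?_⟩
    rw [← hm, ← Ultrafilter.bind_pure_comp]
    exact Ultrafilter.bind_congr_s14 (Filter.mem_of_superset hprin fun j hj => (hk j hj).symm)
  · have hnonprin : {j | ¬IsPrincipal (g j)} ∈ v := Ultrafilter.compl_mem_iff_notMem.mpr hprin
    have hcl : p ∈ closure (g '' {j | ¬IsPrincipal (g j)}) :=
      hm ▸ Ultrafilter.bind_mem_closure_image_s14 hnonprin g
    by_contra! hne
    refine hp.2 _ ((Set.to_countable _).image g) ?_ ?_ hcl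
    · rintro ⟨j, -, hj⟩
      exact hne.2 j ⟨m, hj⟩
    · rintro _ ⟨j, hj, rfl⟩
      exact hj

theorem WeakPPoint.uCompact_not_rkle {p q : Ultrafilter ℕ} (hp : WeakPPoint p) (hpq : ¬RKLE p q) :
    UCompact q {r : Ultrafilter ℕ // ¬RKLE p r} := by
  intro f
  have hlim : ¬RKLE p (q.bind fun n => (f n).1) := by
    intro h
    rcases hp.rkle_or_exists_rkle_of_rkle_bind h with h | ⟨j, hj⟩
    exacts [hpq h, (f j).2 hj]
  refine ⟨⟨_, hlim⟩, ?_⟩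
  rw [Ultrafilter.coe_map, ← Filter.Tendsto, tendsto_subtype_rng]
  exact ultrafilter_extend_eq_iff.mp (Ultrafilter.extend_eq_bind_s14 _ q)

theorem WeakPPoint.rkle_of_comfortLE {p q : Ultrafilter ℕ} (hp : WeakPPoint p)
    (h : ComfortLE.{0, 0, u} p q) : RKLE p q := by
  by_contra hpq
  refine not_uCompact_not_rkle hp.1 (.of_homeomorph Homeomorph.ulift ?_)
  exact h _ ((hp.uCompact_not_rkle hpq).of_homeomorph Homeomorph.ulift.symm)

section StronglyDiscrete

variable {α β ι : Type*}

/-- The `f i` have pairwise disjoint members, namely the fibres `g ⁻¹' {i}`. -/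
def StronglyDiscrete (f : ι → Ultrafilter α) : Prop :=
  ∃ g : α → ι, ∀ i, (f i).map g = pure i

theorem StronglyDiscrete.rkle_bind {f : ι → Ultrafilter α} (hf : StronglyDiscrete f)
    (w : Ultrafilter ι) : RKLE w (w.bind f) := by
  obtain ⟨g, hg⟩ := hf
  refine ⟨g, ?_⟩
  simp only [Ultrafilter.map_bind_s14, hg]
  exact (w.bind_pure_comp id).trans w.map_id

theorem StronglyDiscrete.rkle_bind_of_eventually {f : ι → Ultrafilter α}
    (hf : StronglyDiscrete f) {w : Ultrafilter ι} {p : Ultrafilter β}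
    (h : ∀ᶠ i in w, RKLE p (f i)) : RKLE p (w.bind f) := by
  obtain ⟨g, hg⟩ := hf
  have : Nonempty β := ⟨(p.nonempty_of_mem (s := univ) univ_mem).some⟩
  choose! m hm using fun i (hi : RKLE p (f i)) => hi
  refine ⟨fun a => m (g a) a, ?_⟩
  rw [Ultrafilter.map_bind_s14, ← Ultrafilter.bind_const w p]
  refine Ultrafilter.bind_congr_s14 (h.mono fun i hi => ?_)
  have hfib : g ⁻¹' {i} ∈ f i := by
    rw [← Ultrafilter.mem_map, hg]
    exact Ultrafilter.mem_pure.mpr rfl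
  rw [← hm i hi]
  exact Ultrafilter.coe_injective
    (Filter.map_congr (Filter.eventually_of_mem hfib fun a (ha : g a = i) => by simp only [ha]))

theorem StronglyDiscrete.of_isPrincipal [Nonempty ι] {f : ι → Ultrafilter α}
    (hinj : Function.Injective f) (hf : ∀ i, IsPrincipal (f i)) : StronglyDiscrete f := by
  choose k hk using hf
  have hk_inj : Function.Injective k := fun i j hij => hinj (by rw [hk, hk, hij])
  refine ⟨Function.invFun k, fun i => ?_⟩
  rw [hk, Ultrafilter.map_pure, Function.leftInverse_invFun hk_inj]

theorem exists_mem_forall_mem_eq_of_discreteTopology {f : ι → Ultrafilter α}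
    (hinj : Function.Injective f) [DiscreteTopology (range f)] (j : ι) :
    ∃ A ∈ f j, ∀ i, A ∈ f i → i = j := by
  have hU : {(⟨f j, j, rfl⟩ : range f)} ∈ 𝓝 (⟨f j, j, rfl⟩ : range f) :=
    mem_nhds_discrete.mpr rfl
  rw [nhds_subtype, mem_comap] at hU
  obtain ⟨U, hU, hUf⟩ := hU
  obtain ⟨_, ⟨A, rfl⟩, hA, hAU⟩ := ultrafilterBasis_is_basis.mem_nhds_iff.mp hU
  refine ⟨A, hA, fun i hi => hinj ?_⟩
  have hfi : (⟨f i, i, rfl⟩ : range f) ∈ Subtype.val ⁻¹' U := hAU hi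
  exact congrArg Subtype.val (mem_singleton_iff.mp (hUf hfi))

theorem StronglyDiscrete.of_discreteTopology {f : ℕ → Ultrafilter α}
    (hinj : Function.Injective f) (hd : DiscreteTopology (range f)) : StronglyDiscrete f := by
  classical
  choose A hAf hA using exists_mem_forall_mem_eq_of_discreteTopology hinj
  refine ⟨fun a => if h : ∃ j, a ∈ A j then Nat.find h else 0, fun j => ?_⟩
  have hmem : A j ∩ ⋂ i ∈ Iio j, (A i)ᶜ ∈ f j := by
    refine inter_mem (hAf j) ((biInter_mem (finite_Iio j)).mpr fun i hi => ?_)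
    exact Ultrafilter.compl_mem_iff_notMem.mpr fun h => (mem_Iio.mp hi).ne' (hA i j h)
  refine Ultrafilter.eq_of_le ?_
  rw [Ultrafilter.coe_pure, Filter.le_pure_iff, Ultrafilter.coe_map, Filter.mem_map]
  refine Filter.mem_of_superset hmem fun a ha => ?_
  have hex : ∃ j, a ∈ A j := ⟨j, ha.1⟩
  simp only [mem_preimage, mem_singleton_iff, dif_pos hex, Nat.find_eq_iff]
  exact ⟨ha.1, fun i hi => by simpa using mem_iInter₂.mp ha.2 i hi⟩

end StronglyDiscrete

section Admissible

open Order

variable {L : Ordinal → ℕ → Ordinal} {u : Ordinal → Ultrafilter ℕ} {f : Ordinal → ℕ → Ultrafilter ℕ}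

theorem vSeq_eq_bind (u : Ordinal → Ultrafilter ℕ) (f : Ordinal → ℕ → Ultrafilter ℕ) (α : Ordinal) :
    vSeq u f α = (u α).bind (f α) :=
  Ultrafilter.extend_eq_bind_s14 _ _

theorem Admissible.stronglyDiscrete (hf : Admissible L u f) {α : Ordinal} (hα : α < omega1) :
    StronglyDiscrete (f α) := by
  rcases Ordinal.zero_or_succ_or_isSuccLimit α with rfl | ⟨β, rfl⟩ | hlim
  · exact .of_isPrincipal hf.1.1 hf.1.2
  · rw [succ_eq_add_one] at hα ⊢
    exact .of_discreteTopology (hf.2.1 β hα).1 (hf.2.1 β hα).2.1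
  · exact .of_discreteTopology (hf.2.2 α hα hlim).1 (hf.2.2 α hα hlim).2.1

theorem Admissible.rkle_vSeq (hf : Admissible L u f) {α : Ordinal} (hα : α < omega1) :
    RKLE (u α) (vSeq u f α) :=
  vSeq_eq_bind u f α ▸ (hf.stronglyDiscrete hα).rkle_bind (u α)

theorem Admissible.exists_lt_uIso_vSeq (hL : IsLadderSystem L) (hf : Admissible L u f)
    {α : Ordinal} (hα : α < omega1) (hα0 : α ≠ 0) (j : ℕ) :
    ∃ σ < α, UIso (f α j) (vSeq u f σ) := by
  rcases Ordinal.zero_or_succ_or_isSuccLimit α with rfl | ⟨β, rfl⟩ | hlim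
  · exact absurd rfl hα0
  · rw [succ_eq_add_one] at hα ⊢
    exact ⟨β, Order.lt_add_one_iff.mpr le_rfl, (hf.2.1 β hα).2.2 j⟩
  · exact ⟨L α j, (hL α hα hlim).2.1 j, (hf.2.2 α hα hlim).2.2 j⟩

theorem Admissible.eventually_uIso_vSeq (hL : IsLadderSystem L) (hf : Admissible L u f)
    {γ α : Ordinal} (hα : α < omega1) (hu : IsSuccLimit α → ¬IsPrincipal (u α)) (hγα : γ < α) :
    ∀ᶠ j in u α, ∃ σ, γ ≤ σ ∧ σ < α ∧ UIso (f α j) (vSeq u f σ) := by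
  rcases Ordinal.zero_or_succ_or_isSuccLimit α with rfl | ⟨β, rfl⟩ | hlim
  · exact absurd hγα zero_le.not_gt
  · rw [succ_eq_add_one] at hα hγα ⊢
    exact Eventually.of_forall fun j =>
      ⟨β, Order.lt_add_one_iff.mp hγα, Order.lt_add_one_iff.mpr le_rfl, (hf.2.1 β hα).2.2 j⟩
  · obtain ⟨hmono, hlt, hcof⟩ := hL α hα hlim
    obtain ⟨i, hi⟩ := hcof γ hγα
    have hle : (u α : Filter ℕ) ≤ atTop := by
      rw [← Nat.cofinite_eq_atTop]
      exact (Ultrafilter.le_cofinite_or_eq_pure _).resolve_right fun ⟨n, hn⟩ => hu hlim ⟨n, hn⟩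
    filter_upwards [hle (eventually_ge_atTop i)] with j hj
    exact ⟨L α j, hi.trans (hmono.monotone hj), hlt j, (hf.2.2 α hα hlim).2.2 j⟩

theorem Admissible.vSeq_rkle_vSeq (hL : IsLadderSystem L) (hf : Admissible L u f)
    (hu : ∀ α < omega1, IsSuccLimit α → ¬IsPrincipal (u α)) {γ α : Ordinal} (hγα : γ ≤ α)
    (hα : α < omega1) : RKLE (vSeq u f γ) (vSeq u f α) := by
  induction α using WellFoundedLT.induction with
  | _ α IH =>
  rcases hγα.eq_or_lt with rfl | hlt
  · exact .refl _
  rw [vSeq_eq_bind u f α]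
  refine (hf.stronglyDiscrete hα).rkle_bind_of_eventually ?_
  filter_upwards [hf.eventually_uIso_vSeq hL hα (hu α hα) hlt] with j ⟨σ, hγσ, hσα, hiso⟩
  exact (IH σ hσα hγσ (hσα.trans hα)).trans hiso.symm.rkle

theorem Admissible.exists_rkle_of_rkle_vSeq (hL : IsLadderSystem L) (hf : Admissible L u f)
    {p : Ultrafilter ℕ} (hp : WeakPPoint p) {β : Ordinal} (hβ : β < omega1)
    (h : RKLE p (vSeq u f β)) : ∃ δ ≤ β, RKLE p (u δ) := by
  induction β using WellFoundedLT.induction with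
  | _ β IH =>
  rw [vSeq_eq_bind] at h
  rcases hp.rkle_or_exists_rkle_of_rkle_bind h with h | ⟨j, hj⟩
  · exact ⟨β, le_rfl, h⟩
  rcases eq_or_ne β 0 with rfl | hβ0
  · exact absurd (IsPrincipal.of_rkle hj (hf.1.2 j)) hp.1
  obtain ⟨σ, hσβ, hiso⟩ := hf.exists_lt_uIso_vSeq hL hβ hβ0 j
  obtain ⟨δ, hδσ, hδ⟩ := IH σ hσβ (hσβ.trans hβ) (hj.trans hiso.rkle)
  exact ⟨δ, hδσ.trans hσβ.le, hδ⟩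

end Admissible

section Modification

variable {u : Ordinal → Ultrafilter ℕ} {X : Set Ordinal} {α : Ordinal}

theorem modif_of_mem (h : α ∈ X) : modif u X α = u α :=
  if_pos (.inl h)

theorem modif_of_isSuccLimit (h : Order.IsSuccLimit α) (hα : α < omega1) : modif u X α = u α :=
  if_pos (.inr ⟨h, hα⟩)

theorem modif_eq_of_not_isPrincipal (h : ¬IsPrincipal (modif u X α)) :
    (α ∈ X ∨ (Order.IsSuccLimit α ∧ α < omega1)) ∧ modif u X α = u α := by
  by_cases hα : α ∈ X ∨ (Order.IsSuccLimit α ∧ α < omega1)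
  · exact ⟨hα, if_pos hα⟩
  · exact absurd ⟨0, if_neg hα⟩ h

end Modification

theorem stmt14 (L : Ordinal → ℕ → Ordinal) (hL : IsLadderSystem L)
    (u : Ordinal → Ultrafilter ℕ)
    (hu : ∀ α : Ordinal, α < omega1 → WeakPPoint (u α))
    (X Y : Set Ordinal) (fX fY : Ordinal → ℕ → Ultrafilter ℕ)
    (hfX : Admissible L (modif u X) fX) (hfY : Admissible L (modif u Y) fY) :
    ∀ α β : Ordinal, α < omega1 → β < omega1 →
      ComfortLE (vSeq (modif u X) fX α) (vSeq (modif u Y) fY β) →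
      ∀ γ ∈ X, γ ≤ α →
        ∃ δ ≤ β, (δ ∈ Y ∨ (Order.IsSuccLimit δ ∧ δ < omega1)) ∧ RKLE (u γ) (u δ) := by
  intro α β hα hβ hC γ hγX hγα
  have hγ : γ < omega1 := hγα.trans_lt hα
  have hp : WeakPPoint (u γ) := hu γ hγ
  have hlimX : ∀ α < omega1, Order.IsSuccLimit α → ¬IsPrincipal (modif u X α) :=
    fun α hα hlim => modif_of_isSuccLimit hlim hα ▸ (hu α hα).1
  have hγX' : RKLE (u γ) (vSeq (modif u X) fX α) := by
    rw [← modif_of_mem (u := u) hγX]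
    exact (hfX.rkle_vSeq hγ).trans (hfX.vSeq_rkle_vSeq hL hlimX hγα hα)
  obtain ⟨δ, hδβ, hδ⟩ :=
    hfY.exists_rkle_of_rkle_vSeq hL hp hβ (hp.rkle_of_comfortLE (hγX'.comfortLE.trans hC))
  obtain ⟨hδY, hδu⟩ := modif_eq_of_not_isPrincipal fun h => hp.1 (IsPrincipal.of_rkle hδ h)
  exact ⟨δ, hδβ, hδY, hδu ▸ hδ⟩
end
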